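/- Let A, B, C be positive real numbers with A + B + C = π such that A/π, B/π, C/π are all rational, and set a = sin A, b = sin B, c = sin C (sides of a triangle with these angles inscribed in a circle of diameter 1). Assume a, b, c are pairwise distinct (the triangle is non-isosceles), and define the external bisector lengths ℓ_A = 2·b·c·sin(A/2)/|b − c| and ℓ_B = 2·a·c·sin(B/2)/|a − c|. If ℓ_A = ℓ_B, then {A, B} = {11π/15, π/15} and C = π/5; that is, among triangles whose angles are commensurable with π, the equality of the external bisectors from A and from B holds only for the first pentadecagonal triangle. -/

import Mathlib

open Real IntermediateField Polynomial

/-! Auxiliary lemmas -/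

lemma trig_identity (t d : ℝ) :
    Real.cos (t+d)^2*(1 - Real.sin (3*t-d)) - Real.cos (t-d)^2*(1 - Real.sin (3*t+d))
    = 2 * Real.sin d * Real.cos t *
      (Real.cos d - Real.sin t - 2*Real.sin t^2) * (Real.cos d - Real.sin t + 2*Real.sin t^2) := by
  rw [show (3:ℝ)*t-d = t+(t+(t-d)) by ring, show (3:ℝ)*t+d = t+(t+(t+d)) by ring]
  simp only [Real.sin_add, Real.cos_add, Real.sin_sub, Real.cos_sub]
  linear_combination
    (2*Real.cos t^3*Real.sin d*Real.cos d^2 + 4*Real.sin t^2*Real.cos t*Real.sin d*Real.cos d^2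
      + 2*Real.sin t^2*Real.cos t*Real.sin d^3 + 2*Real.cos t*Real.sin d*Real.cos d^2)
      * (Real.sin_sq_add_cos_sq t)
    + (-8*Real.sin t^4*Real.cos t*Real.sin d + 2*Real.sin t^2*Real.cos t*Real.sin d)
      * (Real.sin_sq_add_cos_sq d)

lemma two_cos_eq (θ : ℝ) :
    ((2*Real.cos θ : ℝ) : ℂ) = Complex.exp ((θ:ℂ) * Complex.I)
      + (Complex.exp ((θ:ℂ) * Complex.I))⁻¹ := by
  rw [← Complex.exp_neg, show -((θ:ℂ) * Complex.I) = (-θ:ℂ) * Complex.I by ring,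
    Complex.exp_mul_I, Complex.exp_mul_I, Complex.cos_neg, Complex.sin_neg]
  push_cast
  ring

lemma monic_XN_sub_one (N : ℕ) (hN : N ≠ 0) : (Polynomial.X ^ N - 1 : Polynomial ℚ).Monic := by
  simpa using Polynomial.monic_X_pow_sub_C (1:ℚ) hN

/-- Given a complex root of unity `w` and `y = w + w⁻¹`, every real root `r` of the minimal
polynomial of `y` over `ℚ` satisfies `r ≤ 2`. -/
lemma conj_bound_aux (w : ℂ) (N : ℕ) (hNpos : 0 < N) (hwN : w ^ N = 1) (y : ℝ)
    (hyw : ((y:ℝ):ℂ) = w + w⁻¹) (r : ℝ)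
    (hr : (Polynomial.aeval ((r : ℝ) : ℂ)) (minpoly ℚ ((y : ℝ) : ℂ)) = 0) :
    r ≤ 2 := by
  have hwint : IsIntegral ℚ w :=
    ⟨Polynomial.X ^ N - 1, monic_XN_sub_one N hNpos.ne', by simp [hwN]⟩
  have hwL : w ∈ ℚ⟮w⟯ := IntermediateField.mem_adjoin_simple_self ℚ w
  have hyL : ((y:ℝ):ℂ) ∈ ℚ⟮w⟯ := by
    rw [hyw]; exact add_mem hwL (inv_mem hwL)
  obtain ⟨φ, hφ⟩ := IntermediateField.exists_algHom_adjoin_of_splits_of_aeval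
    (F := ℚ) (E := ℂ) (K := ℂ) (S := {w})
    (fun s hs => by
      rw [Set.mem_singleton_iff] at hs
      subst hs
      exact ⟨hwint, IsAlgClosed.splits _⟩)
    (x := ((y:ℝ):ℂ)) (y := ((r:ℝ):ℂ)) hyL hr
  set v : ℂ := φ ⟨w, hwL⟩ with hv
  have hvN : v ^ N = 1 := by
    rw [hv, ← map_pow]
    rw [show (⟨w, hwL⟩ : ℚ⟮w⟯) ^ N = 1 from Subtype.ext (by push_cast [hwN]; rfl)]
    exact map_one φ
  have habs : ‖v‖ = 1 := by
    have h1 : ‖v‖ ^ N = 1 := by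
      rw [← norm_pow, hvN, norm_one]
    have h2 : (0:ℝ) ≤ ‖v‖ := norm_nonneg v
    rcases lt_trichotomy ‖v‖ 1 with h | h | h
    · exact absurd h1 (by nlinarith [pow_lt_one₀ h2 h hNpos.ne'])
    · exact h
    · exact absurd h1 (by nlinarith [one_lt_pow₀ h hNpos.ne'])
  have hsplit : (⟨((y:ℝ):ℂ), hyL⟩ : ℚ⟮w⟯) = ⟨w, hwL⟩ + (⟨w, hwL⟩)⁻¹ := by
    apply Subtype.ext
    push_cast
    rw [hyw]
  have hrv : ((r:ℝ):ℂ) = v + v⁻¹ := by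
    rw [← hφ, hsplit, map_add, map_inv₀]
  have hvinv : v⁻¹ = (starRingEnd ℂ) v := by
    have hm : v * (starRingEnd ℂ) v = 1 := by
      rw [Complex.mul_conj, ← Complex.sq_norm, habs]
      norm_num
    exact (eq_inv_of_mul_eq_one_right hm).symm
  have hre : r = 2 * v.re := by
    have h := hrv
    rw [hvinv, Complex.add_conj] at h
    exact_mod_cast h
  have := Complex.re_le_norm v
  rw [habs] at this
  linarith

/-- Every real root of the minimal polynomial of `2cos(2πτ)`, `τ` rational, is at most 2. -/
lemma conj_bound (τ : ℚ) (r : ℝ)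
    (hr : (Polynomial.aeval ((r : ℝ) : ℂ)) (minpoly ℚ ((2*Real.cos ((τ:ℝ)*(2*π)) : ℝ) : ℂ)) = 0) :
    r ≤ 2 := by
  set w : ℂ := Complex.exp ((((τ:ℝ)*(2*π) : ℝ) : ℂ) * Complex.I) with hw
  have hwN : w ^ τ.den = 1 := by
    rw [hw, ← Complex.exp_nat_mul]
    rw [show (τ.den:ℂ) * ((((τ:ℝ)*(2*π):ℝ):ℂ) * Complex.I) = (τ.num : ℂ) * (2*(π:ℂ)*Complex.I) by
      have h1 : (τ:ℂ) * (τ.den:ℂ) = (τ.num : ℂ) := by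
        exact_mod_cast congrArg (Rat.cast : ℚ → ℂ) (Rat.mul_den_eq_num τ)
      push_cast
      linear_combination (2*(π:ℂ)*Complex.I) * h1]
    exact Complex.exp_int_mul_two_pi_mul_I τ.num
  exact conj_bound_aux w τ.den τ.pos hwN _ (two_cos_eq _) r hr

set_option maxHeartbeats 2000000 in
/-- The number-theoretic core: if `γ, dd` are rational multiples of `2π`, `π/3 < γ < π/2` and
`2cos dd = (2cos γ)² + 2cos γ`, then `γ = 2π/5` and `cos dd = 1/2`. -/
lemma NT_core (γ dd : ℝ) (ρ τ : ℚ) (hγ : γ = (ρ:ℝ)*(2*π)) (hdd : dd = (τ:ℝ)*(2*π))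
    (h1 : π/3 < γ) (h2 : γ < π/2)
    (heq : 2*Real.cos dd = (2*Real.cos γ)^2 + 2*Real.cos γ) :
    γ = 2*π/5 ∧ Real.cos dd = 1/2 := by
  have hπ := Real.pi_pos
  have hρ1R : (1:ℝ)/6 < (ρ:ℝ) := by
    rw [hγ] at h1; nlinarith
  have hρ2R : (ρ:ℝ) < 1/4 := by
    rw [hγ] at h2; nlinarith
  have hρ1 : (1:ℚ)/6 < ρ := by
    have h := hρ1R
    rw [show (1:ℝ)/6 = (((1:ℚ)/6 : ℚ) : ℝ) by norm_num] at h
    exact_mod_cast h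
  have hρ2 : ρ < (1:ℚ)/4 := by
    have h := hρ2R
    rw [show (1:ℝ)/4 = (((1:ℚ)/4 : ℚ) : ℝ) by norm_num] at h
    exact_mod_cast h
  have hρpos : 0 < ρ := by linarith
  have hnum : 0 < ρ.num := Rat.num_pos.mpr hρpos
  set m : ℕ := ρ.den with hm
  have hmpos : 0 < m := ρ.pos
  set i : ℕ := ρ.num.toNat with hi
  have hipos : 0 < i := by omega
  have hinum : (i : ℤ) = ρ.num := Int.toNat_of_nonneg hnum.le
  have hcop : Nat.Coprime i m := by
    have := ρ.reduced
    rwa [show ρ.num.natAbs = i by omega] at this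
  have hiq : (i:ℚ) = ρ * m := by
    rw [show ((i:ℚ)) = ((ρ.num : ℚ)) by exact_mod_cast congrArg (Int.cast : ℤ → ℚ) hinum]
    exact_mod_cast (Rat.mul_den_eq_num ρ).symm
  have hmq : (4:ℚ) < m := by
    have h4 : (i:ℚ) ≥ 1 := by exact_mod_cast hipos
    nlinarith [hiq, hρ2, (show (0:ℚ) < m by exact_mod_cast hmpos)]
  have hm5 : 5 ≤ m := by exact_mod_cast (by exact_mod_cast hmq : (4:ℕ) < m)
  -- the root of unity z = exp(2πi·i/m)
  set z : ℂ := Complex.exp (2*π*Complex.I*((i:ℂ)/(m:ℂ))) with hz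
  have hprim : IsPrimitiveRoot z m := Complex.isPrimitiveRoot_exp_of_coprime i m hmpos.ne' hcop
  have hzint : IsIntegral ℚ z :=
    ⟨Polynomial.X ^ m - 1, monic_XN_sub_one m hmpos.ne', by simp [hprim.pow_eq_one]⟩
  have hq' : ρ = (i:ℚ)/(m:ℚ) := by
    rw [← Rat.num_div_den ρ]
    congr 1
    exact_mod_cast hinum.symm
  have hρim : (ρ:ℝ) = (i:ℝ)/(m:ℝ) := by
    rw [hq']
    push_cast
    ring
  have hzexp : z = Complex.exp (((γ:ℝ):ℂ) * Complex.I) := by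
    rw [hz]; congr 1
    rw [hγ, hρim]
    push_cast
    ring
  have hxz : ((2*Real.cos γ : ℝ) : ℂ) = z + z⁻¹ := by
    rw [hzexp]; exact two_cos_eq γ
  -- the embedding sending z to z₁ = exp(2πi/m)
  set z₁ : ℂ := Complex.exp (2*π*Complex.I/(m:ℂ)) with hz₁
  have hprim1 : IsPrimitiveRoot z₁ m := Complex.isPrimitiveRoot_exp m hmpos.ne'
  have hz₁root : (Polynomial.aeval z₁) (minpoly ℚ z) = 0 := by
    rw [← Polynomial.cyclotomic_eq_minpoly_rat hprim hmpos]
    have h := hprim1.isRoot_cyclotomic hmpos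
    rw [Polynomial.IsRoot] at h
    rw [Polynomial.aeval_def, Polynomial.eval₂_eq_eval_map, Polynomial.map_cyclotomic]
    exact h
  have hzmem : z ∈ ℚ⟮z⟯ := IntermediateField.mem_adjoin_simple_self ℚ z
  obtain ⟨σ, hσ⟩ := IntermediateField.exists_algHom_adjoin_of_splits_of_aeval
    (F := ℚ) (E := ℂ) (K := ℂ) (S := {z})
    (fun s hs => by
      rw [Set.mem_singleton_iff] at hs
      subst hs
      exact ⟨hzint, IsAlgClosed.splits _⟩)
    (x := z) (y := z₁) hzmem hz₁root
  -- transport the equation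
  set zz : ℚ⟮z⟯ := ⟨z, hzmem⟩ with hzz
  set Y : ℚ⟮z⟯ := (zz + zz⁻¹)^2 + (zz + zz⁻¹) with hY
  have hYmap : (algebraMap ℚ⟮z⟯ ℂ) Y = ((2*Real.cos ((τ:ℝ)*(2*π)) : ℝ) : ℂ) := by
    have h0 : (algebraMap ℚ⟮z⟯ ℂ) Y = (z+z⁻¹)^2 + (z+z⁻¹) := by
      push_cast [hY]
      rfl
    rw [h0, ← hxz, ← hdd]
    rw [show ((2*Real.cos dd : ℝ):ℂ) = ((2*Real.cos γ)^2 + 2*Real.cos γ : ℝ) by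
      exact_mod_cast congrArg (Complex.ofReal) heq]
    push_cast
    ring
  have hminpoly : minpoly ℚ ((2*Real.cos ((τ:ℝ)*(2*π)) : ℝ) : ℂ) = minpoly ℚ Y := by
    rw [← hYmap]
    exact minpoly.algebraMap_eq (algebraMap ℚ⟮z⟯ ℂ).injective Y
  -- image of Y under σ
  have hz₁exp : z₁ = Complex.exp (((2*π/m : ℝ):ℂ) * Complex.I) := by
    rw [hz₁]; congr 1; push_cast; ring
  have hc₁ : ((2*Real.cos (2*π/m) : ℝ) : ℂ) = z₁ + z₁⁻¹ := by
    rw [hz₁exp]; exact two_cos_eq _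
  set c₁ : ℝ := 2*Real.cos (2*π/(m:ℝ)) with hc₁def
  have hσY : σ Y = ((c₁^2 + c₁ : ℝ) : ℂ) := by
    have hσzz : σ zz = z₁ := hσ
    rw [hY]
    rw [map_add, map_pow, map_add, map_inv₀, hσzz, ← hc₁]
    push_cast
    ring
  have hroot2 : (Polynomial.aeval (((c₁^2 + c₁ : ℝ)) : ℂ))
      (minpoly ℚ ((2*Real.cos ((τ:ℝ)*(2*π)) : ℝ) : ℂ)) = 0 := by
    rw [hminpoly, ← hσY, Polynomial.aeval_algHom_apply, minpoly.aeval, map_zero]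
  have hrle : c₁^2 + c₁ ≤ 2 := conj_bound τ _ hroot2
  have hc₁ge : -2 ≤ c₁ := by
    have := Real.neg_one_le_cos (2*π/(m:ℝ))
    rw [hc₁def]; linarith
  have hc₁le : c₁ ≤ 1 := by nlinarith
  -- hence m ≤ 6
  have hcosle : Real.cos (2*π/(m:ℝ)) ≤ 1/2 := by rw [hc₁def] at hc₁le; linarith
  have hm6 : m ≤ 6 := by
    by_contra h
    push_neg at h
    have hm7 : (7:ℝ) ≤ m := by exact_mod_cast h
    have hlt : 2*π/(m:ℝ) < π/3 := by
      rw [div_lt_iff₀ (by positivity)]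
      nlinarith
    have hmem1 : 2*π/(m:ℝ) ∈ Set.Icc 0 π := by
      constructor
      · positivity
      · rw [div_le_iff₀ (by positivity)]
        nlinarith
    have hmem2 : π/3 ∈ Set.Icc (0:ℝ) π := by
      constructor
      · positivity
      · linarith
    have hgt : Real.cos (π/3) < Real.cos (2*π/(m:ℝ)) :=
      Real.strictAntiOn_cos hmem1 hmem2 hlt
    rw [Real.cos_pi_div_three] at hgt
    linarith
  -- m ∈ {5,6} and 1/6 < i/m < 1/4 forces ρ = 1/5
  have hinum1 : i = 1 := by
    have hmq6 : (m:ℚ) ≤ 6 := by exact_mod_cast hm6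
    have hup : (i:ℚ) < 2 := by nlinarith [hiq]
    have : i < 2 := by exact_mod_cast hup
    omega
  have hm5' : m = 5 := by
    rcases (by omega : m = 5 ∨ m = 6) with h | h
    · exact h
    · exfalso
      have hρ6 : ρ = 1/6 := by
        rw [← Rat.num_div_den ρ, ← hinum, hinum1, ← hm, h]
        norm_num
      rw [hρ6] at hρ1
      norm_num at hρ1
  have hρval : ρ = 1/5 := by
    rw [← Rat.num_div_den ρ, ← hinum, hinum1, ← hm, hm5']
    norm_num
  have hγval : γ = 2*π/5 := by
    rw [hγ, hρval]
    push_cast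
    ring
  refine ⟨hγval, ?_⟩
  -- exact value of cos(2π/5)
  set c : ℝ := Real.cos (2*π/5) with hc
  have e1 : Real.cos (2*(2*π/5)) = 2*c^2 - 1 := Real.cos_two_mul _
  have e2 : Real.cos (3*(2*π/5)) = 4*c^3 - 3*c := Real.cos_three_mul _
  have e4 : Real.cos (3*(2*π/5)) = Real.cos (2*(2*π/5)) := by
    rw [show (3:ℝ)*(2*π/5) = 2*π - 2*(2*π/5) by ring, Real.cos_two_pi_sub]
  have hcne : c < 1 := by
    have h0 : Real.cos (2*π/5) < Real.cos 0 :=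
      Real.strictAntiOn_cos ⟨le_rfl, Real.pi_pos.le⟩
        ⟨by positivity, by linarith⟩ (by positivity)
    rw [Real.cos_zero] at h0
    exact h0
  have quad : 4*c^2 + 2*c - 1 = 0 := by
    have key : 4*c^3 - 3*c = 2*c^2 - 1 := by rw [← e2, e4, e1]
    have factor : (c - 1)*(4*c^2 + 2*c - 1) = 0 := by linear_combination key
    rcases mul_eq_zero.mp factor with h | h
    · exfalso; linarith
    · exact h
  have hfin : Real.cos dd = 1/2 := by
    rw [hγval] at heq
    rw [← hc] at heq
    nlinarith [heq, quad]
  exact hfin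

set_option maxHeartbeats 2000000 in
theorem stmt_19 (A B C : ℝ) (hA : 0 < A) (hB : 0 < B) (hC : 0 < C)
    (hsum : A + B + C = Real.pi)
    (hArat : ∃ q : ℚ, A = q * Real.pi)
    (hBrat : ∃ q : ℚ, B = q * Real.pi)
    (hCrat : ∃ q : ℚ, C = q * Real.pi)
    (a b c : ℝ) (ha : a = Real.sin A) (hb : b = Real.sin B) (hc : c = Real.sin C)
    (hab : a ≠ b) (hbc : b ≠ c) (hac : a ≠ c)
    (ℓA ℓB : ℝ)
    (hℓA : ℓA = 2 * b * c * Real.sin (A / 2) / |b - c|)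
    (hℓB : ℓB = 2 * a * c * Real.sin (B / 2) / |a - c|)
    (heq : ℓA = ℓB) :
    ((A = 11 * Real.pi / 15 ∧ B = Real.pi / 15) ∨
      (A = Real.pi / 15 ∧ B = 11 * Real.pi / 15)) ∧ C = Real.pi / 5 := by
  obtain ⟨qA, hqA⟩ := hArat
  obtain ⟨qB, hqB⟩ := hBrat
  obtain ⟨qC, hqC⟩ := hCrat
  have hπ := Real.pi_pos
  set t : ℝ := C/2 with ht
  set d : ℝ := (A-B)/2 with hd
  have hApi : A < π := by linarith
  have hBpi : B < π := by linarith
  have hCpi : C < π := by linarith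
  have htpos : 0 < t := by rw [ht]; linarith
  have htlt : t < π/2 := by rw [ht]; linarith
  have hst : 0 < Real.sin t := Real.sin_pos_of_pos_of_lt_pi htpos (by linarith)
  have hct : 0 < Real.cos t := Real.cos_pos_of_mem_Ioo ⟨by linarith, htlt⟩
  have hdbound : |d| < π/2 - t := abs_lt.mpr ⟨by rw [hd, ht]; linarith, by rw [hd, ht]; linarith⟩
  have hANeB : A ≠ B := fun h => hab (by rw [ha, hb, h])
  have hdne : d ≠ 0 := by
    rw [hd]
    intro h
    exact hANeB (by linarith [h])
  have hsd : Real.sin d ≠ 0 := by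
    intro h
    have hlo : -π < d := by
      have := (abs_lt.mp hdbound).1
      linarith
    have hhi : d < π := by
      have := (abs_lt.mp hdbound).2
      linarith
    exact hdne ((Real.sin_eq_zero_iff_of_lt_of_lt hlo hhi).mp h)
  have hcd_gt : Real.sin t < Real.cos d := by
    have h1 : Real.cos (π/2 - t) < Real.cos |d| :=
      Real.strictAntiOn_cos ⟨abs_nonneg d, by linarith⟩ ⟨by linarith, by linarith⟩ hdbound
    rw [Real.cos_abs, Real.cos_pi_div_two_sub] at h1
    exact h1
  -- positivity of the sines
  have hsA : 0 < Real.sin A := Real.sin_pos_of_pos_of_lt_pi hA hApi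
  have hsB : 0 < Real.sin B := Real.sin_pos_of_pos_of_lt_pi hB hBpi
  have hsC : 0 < Real.sin C := Real.sin_pos_of_pos_of_lt_pi hC hCpi
  have hsA2 : 0 < Real.sin (A/2) := Real.sin_pos_of_pos_of_lt_pi (by linarith) (by linarith)
  have hsB2 : 0 < Real.sin (B/2) := Real.sin_pos_of_pos_of_lt_pi (by linarith) (by linarith)
  -- denominators
  have hbc_eq : b - c = 2 * Real.sin ((B-C)/2) * Real.sin (A/2) := by
    rw [hb, hc, Real.sin_sub_sin, show (B+C)/2 = π/2 - A/2 by linarith, Real.cos_pi_div_two_sub]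
  have hac_eq : a - c = 2 * Real.sin ((A-C)/2) * Real.sin (B/2) := by
    rw [ha, hc, Real.sin_sub_sin, show (A+C)/2 = π/2 - B/2 by linarith, Real.cos_pi_div_two_sub]
  have hQne : Real.sin ((B-C)/2) ≠ 0 := by
    intro h
    apply hbc
    have : b - c = 0 := by rw [hbc_eq, h]; ring
    linarith
  have hPne : Real.sin ((A-C)/2) ≠ 0 := by
    intro h
    apply hac
    have : a - c = 0 := by rw [hac_eq, h]; ring
    linarith
  have habs_bc : |b - c| = 2 * |Real.sin ((B-C)/2)| * Real.sin (A/2) := by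
    rw [hbc_eq, abs_mul, abs_mul, abs_two, abs_of_pos hsA2]
  have habs_ac : |a - c| = 2 * |Real.sin ((A-C)/2)| * Real.sin (B/2) := by
    rw [hac_eq, abs_mul, abs_mul, abs_two, abs_of_pos hsB2]
  have hQpos : 0 < |Real.sin ((B-C)/2)| := abs_pos.mpr hQne
  have hPpos : 0 < |Real.sin ((A-C)/2)| := abs_pos.mpr hPne
  rw [hℓA, hℓB] at heq
  rw [div_eq_div_iff (abs_ne_zero.mpr (sub_ne_zero.mpr hbc)) (abs_ne_zero.mpr (sub_ne_zero.mpr hac))] at heq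
  rw [habs_bc, habs_ac, ha, hb, hc] at heq
  have key : Real.sin B * |Real.sin ((A-C)/2)| = Real.sin A * |Real.sin ((B-C)/2)| := by
    have hposf : (4 * Real.sin C * Real.sin (A/2) * Real.sin (B/2) : ℝ) ≠ 0 := by positivity
    apply mul_left_cancel₀ hposf
    linear_combination heq
  have key2 : Real.sin B^2 * Real.sin ((A-C)/2)^2 = Real.sin A^2 * Real.sin ((B-C)/2)^2 := by
    have h := congrArg (· ^ 2) key
    simpa [mul_pow, sq_abs] using h
  -- rewrite in terms of t and d
  have hsinB : Real.sin B = Real.cos (t+d) := by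
    rw [show B = π/2 - (t+d) by rw [ht, hd]; linarith, Real.sin_pi_div_two_sub]
  have hsinA : Real.sin A = Real.cos (t-d) := by
    rw [show A = π/2 - (t-d) by rw [ht, hd]; linarith, Real.sin_pi_div_two_sub]
  have hP2 : Real.sin ((A-C)/2)^2 = (1 - Real.sin (3*t-d))/2 := by
    rw [Real.sin_sq, Real.cos_sq, show 2*((A-C)/2) = π/2 - (3*t-d) by rw [ht, hd]; linarith,
      Real.cos_pi_div_two_sub]
    ring
  have hQ2 : Real.sin ((B-C)/2)^2 = (1 - Real.sin (3*t+d))/2 := by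
    rw [Real.sin_sq, Real.cos_sq, show 2*((B-C)/2) = π/2 - (3*t+d) by rw [ht, hd]; linarith,
      Real.cos_pi_div_two_sub]
    ring
  rw [hsinA, hsinB, hP2, hQ2] at key2
  have hfact : 2 * Real.sin d * Real.cos t *
      (Real.cos d - Real.sin t - 2*Real.sin t^2) * (Real.cos d - Real.sin t + 2*Real.sin t^2) = 0 := by
    rw [← trig_identity t d]
    linarith [key2]
  have f2pos : 0 < Real.cos d - Real.sin t + 2*Real.sin t^2 := by
    have h2 : 0 ≤ Real.sin t^2 := sq_nonneg _
    linarith [hcd_gt]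
  have keyeq : Real.cos d = Real.sin t + 2*Real.sin t^2 := by
    by_contra hne
    have h1 : Real.cos d - Real.sin t - 2*Real.sin t^2 ≠ 0 := fun h => hne (by linarith)
    exact (mul_ne_zero (mul_ne_zero (mul_ne_zero (mul_ne_zero two_ne_zero hsd) hct.ne') h1)
      f2pos.ne') hfact
  -- sin t < 1/2, hence t < π/6
  have hcdlt : Real.cos d < 1 := by
    have h0 : Real.cos |d| < Real.cos 0 :=
      Real.strictAntiOn_cos ⟨le_rfl, Real.pi_pos.le⟩ ⟨abs_nonneg d, by linarith⟩
        (abs_pos.mpr hdne)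
    rw [Real.cos_abs, Real.cos_zero] at h0
    exact h0
  have hsthalf : Real.sin t < 1/2 := by
    by_contra h
    push_neg at h
    have hp : 0 ≤ (2*Real.sin t - 1)*(Real.sin t + 1) :=
      mul_nonneg (by linarith) (by linarith)
    have hexp : (2*Real.sin t - 1)*(Real.sin t + 1) = 2*Real.sin t^2 + Real.sin t - 1 := by ring
    rw [hexp] at hp
    linarith [keyeq, hcdlt]
  have ht6 : t < π/6 := by
    by_contra h
    push_neg at h
    have : Real.sin (π/6) ≤ Real.sin t :=
      Real.strictMonoOn_sin.monotoneOn ⟨by linarith, by linarith⟩ ⟨by linarith, by linarith⟩ h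
    rw [Real.sin_pi_div_six] at this
    linarith
  -- apply the number-theoretic core
  set γ : ℝ := π/2 - t with hγdef
  have hcosγ : Real.cos γ = Real.sin t := by rw [hγdef, Real.cos_pi_div_two_sub]
  obtain ⟨hγval, hcdval⟩ := NT_core γ d ((1-qC)/4) ((qA-qB)/4)
    (by rw [hγdef, ht, hqC]; push_cast; ring)
    (by rw [hd, hqA, hqB]; push_cast; ring)
    (by rw [hγdef]; linarith)
    (by rw [hγdef]; linarith)
    (by rw [hcosγ]; linear_combination 2*keyeq)
  -- conclude
  have htval : t = π/10 := by
    rw [hγdef] at hγval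
    linarith
  have hCval : C = π/5 := by
    rw [ht] at htval
    linarith
  have hdpi : |d| ≤ π := by
    have h := hdbound
    rw [hγdef] at h
    linarith
  have hdabs : |d| = π/3 := by
    apply Real.injOn_cos ⟨abs_nonneg d, hdpi⟩ ⟨by positivity, by linarith⟩
    rw [Real.cos_abs, hcdval, Real.cos_pi_div_three]
  rcases (abs_eq (by positivity : (0:ℝ) ≤ π/3)).mp hdabs with h | h
  · refine ⟨Or.inl ⟨?_, ?_⟩, hCval⟩
    · rw [hd] at h; linarith
    · rw [hd] at h; linarith
  · refine ⟨Or.inr ⟨?_, ?_⟩, hCval⟩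
    · rw [hd] at h; linarith
    · rw [hd] at h; linarith
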